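/- A descent lemma for twisted polynomial equations: let m ∈ ℕ, ε ∈ Γ_N ⊆ K̄, δ ∈ K̄[t], and F ∈ K̄[t] all of whose coefficients lie in the subring 𝔽̄_q[θ] of K̄. If ε·δ^{(R)} = δ·∏_{j=1}^{R}(t − θ^{q^j})^m + F, then all coefficients of δ lie in 𝔽̄_q[θ], and deg_θ δ ≤ max( qm/(q−1), (deg_θ F)/q^R ), where deg_θ g denotes the maximal degree in θ of the coefficients of g ∈ 𝔽̄_q[θ][t]. (This is the R-fold-twisted form of the equation ε·δ = δ^{(−R)}·T_{m,R} + F^{(−R)} with T_{m,R} = ∏_{i=0}^{R−1}((t−θ)^m)^{(−i)}.) -/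

import Mathlib

noncomputable section

open scoped Classical

namespace ZHPC

variable (Fq : Type) [Field Fq] [Fintype Fq]

/-- `q`, the cardinality of the base finite field `𝔽_q`. -/
def qc : ℕ := Fintype.card Fq

/-- A fixed algebraic closure `𝔽̄_q` of `𝔽_q`. -/
abbrev Fb := AlgebraicClosure Fq

/-- The field `𝔽̄_q((1/θ))` of formal Laurent series in `1/θ` over `𝔽̄_q`, modeled as the
field of formal Laurent series in one variable, `θ` being the inverse of that variable. -/
abbrev Kinf := LaurentSeries (Fb Fq)

/-- The embedding of the constants `𝔽̄_q → 𝔽̄_q((1/θ))`. -/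
def cst : Fb Fq →+* Kinf Fq := HahnSeries.C

/-- The element `θ`. -/
def theta : Kinf Fq := HahnSeries.single (-1 : ℤ) 1

/-- `ℓ_d = ∏_{i=1}^{d} (θ - θ^{q^i})`, with `ℓ_0 = 1`. -/
def ell (d : ℕ) : Kinf Fq := ∏ i ∈ Finset.Icc 1 d, (theta Fq - theta Fq ^ qc Fq ^ i)

/-- Arrays `(𝛆;𝔰)` of some depth `n`. -/
structure PArr (F : Type) where
  depth : ℕ
  s : Fin depth → ℕ
  eps : Fin depth → F

namespace PArr

variable {F : Type}

/-- A *positive array* for level `N`: all entries `sᵢ` are positive integers and all the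
characters `εᵢ` are `N`-th roots of unity. -/
def Positive [Monoid F] (N : ℕ) (A : PArr F) : Prop := (∀ i, 0 < A.s i) ∧ ∀ i, A.eps i ^ N = 1

/-- The weight `w(𝔰) = s₁ + ⋯ + s_n`. -/
def wt (A : PArr F) : ℕ := ∑ i, A.s i

/-- The `i`-th entry of `𝔰` (`0`-indexed), with value `0` beyond the depth. -/
def sAt (A : PArr F) (i : ℕ) : ℕ := if h : i < A.depth then A.s ⟨i, h⟩ else 0

/-- The partial sums `s₁ + ⋯ + s_i` (entries beyond the depth being `0`). -/
def psum (A : PArr F) (i : ℕ) : ℕ := ∑ j ∈ Finset.range i, A.sAt j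

/-- The character `χ(𝛆) = ε₁ ⋯ ε_n`. -/
def chi [CommMonoid F] (A : PArr F) : F := ∏ i, A.eps i

end PArr

/-- The Carlitz multiple polylogarithm at roots of unity
`Li(𝛆;𝔰) = Σ_{d₁ > ⋯ > d_n ≥ 0} ε₁^{d₁}⋯ε_n^{d_n} / (ℓ_{d₁}^{s₁}⋯ℓ_{d_n}^{s_n})`. -/
def Li (A : PArr (Fb Fq)) : Kinf Fq :=
  ∑' d : {f : Fin A.depth → ℕ // StrictAnti f},
    ∏ i, cst Fq (A.eps i ^ d.1 i) / ell Fq (d.1 i) ^ A.s i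

/-- `Si_d(𝛆;𝔰)`: same summand as `Li`, over decreasing tuples with `d₁ = d`. -/
def Sid (d : ℤ) (A : PArr (Fb Fq)) : Kinf Fq :=
  ∑' f : {f : Fin A.depth → ℕ // StrictAnti f ∧ ∀ i : Fin A.depth, i.val = 0 → (f i : ℤ) = d},
    ∏ i, cst Fq (A.eps i ^ f.1 i) / ell Fq (f.1 i) ^ A.s i

/-- `Si_{<d}(𝛆;𝔰)`: same summand as `Li`, over decreasing tuples with `d > d₁`. -/
def SidLt (d : ℤ) (A : PArr (Fb Fq)) : Kinf Fq :=
  ∑' f : {f : Fin A.depth → ℕ // StrictAnti f ∧ ∀ i : Fin A.depth, (f i : ℤ) < d},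
    ∏ i, cst Fq (A.eps i ^ f.1 i) / ell Fq (f.1 i) ^ A.s i

/-- The value at `θ` of the monic polynomial `θ^e + Σ_{j<e} c_j θ^j ∈ A = 𝔽_q[θ]`. -/
def monicVal (e : ℕ) (c : Fin e → Fq) : Kinf Fq :=
  theta Fq ^ e + ∑ j, cst Fq (algebraMap Fq (Fb Fq) (c j)) * theta Fq ^ (j : ℕ)

/-- The power sum `S_d(𝛆;𝔰)`, a sum over tuples of monic polynomials `a₁, …, a_n ∈ A₊`
with `d = deg a₁ > ⋯ > deg a_n ≥ 0`; a monic polynomial of degree `e` is encoded by its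
tuple of lower coefficients `c : Fin e → Fq`. -/
def Sd (d : ℤ) (A : PArr (Fb Fq)) : Kinf Fq :=
  ∑' e : {f : Fin A.depth → ℕ // StrictAnti f ∧ ∀ i : Fin A.depth, i.val = 0 → (f i : ℤ) = d},
    ∑ c : (∀ i, Fin (e.1 i) → Fq),
      ∏ i, cst Fq (A.eps i ^ e.1 i) / monicVal Fq (e.1 i) (c i) ^ A.s i

/-- The `N`-th cyclotomic multiple zeta value `ζ_A(𝛆;𝔰) = Σ_{d ≥ 0} S_d(𝛆;𝔰)`. -/
def zetaA (A : PArr (Fb Fq)) : Kinf Fq := ∑' d : ℕ, Sd Fq (d : ℤ) A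

/-- The cyclotomic field `k_N = 𝔽_q(ζ_N) ⊆ 𝔽̄_q`. -/
def kN (N : ℕ) : Subfield (Fb Fq) :=
  Subfield.closure (Set.range (algebraMap Fq (Fb Fq)) ∪ {x | x ^ N = 1})

/-- The field `K_N = k_N(θ)`, as a subfield of `𝔽̄_q((1/θ))`. -/
def KNf (N : ℕ) : Subfield (Kinf Fq) :=
  Subfield.closure ((cst Fq '' (kN Fq N : Set (Fb Fq))) ∪ {theta Fq})

/-- The ring `A_N = k_N[θ]`, as a subring of `𝔽̄_q((1/θ))`. -/
def AN (N : ℕ) : Subring (Kinf Fq) :=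
  Subring.closure ((cst Fq '' (kN Fq N : Set (Fb Fq))) ∪ {theta Fq})

/-- `CZ_{N,w}`: the `K_N`-span of the `N`-th cyclotomic multiple zeta values of weight `w`. -/
def CZ (N w : ℕ) : Submodule (KNf Fq N) (Kinf Fq) :=
  Submodule.span (KNf Fq N) {x | ∃ A : PArr (Fb Fq), A.Positive N ∧ A.wt = w ∧ x = zetaA Fq A}

/-- `CL_{N,w}`: the `K_N`-span of the CMPL's at `N`-th roots of unity of weight `w`. -/
def CL (N w : ℕ) : Submodule (KNf Fq N) (Kinf Fq) :=
  Submodule.span (KNf Fq N) {x | ∃ A : PArr (Fb Fq), A.Positive N ∧ A.wt = w ∧ x = Li Fq A}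

/-- The index set of pairs `(𝔰,𝛆)` with `𝔰 ∈ S_w` and `𝛆 ∈ Γ_N^{depth 𝔰}`: positive arrays
of weight `w` with `q ∤ sᵢ` for all `i`. -/
def SwIdx (N w : ℕ) : Type :=
  {A : PArr (Fb Fq) // A.Positive N ∧ 0 < A.depth ∧ A.wt = w ∧ ∀ i, ¬ qc Fq ∣ A.s i}

/-- `K̄`, an algebraic closure of `K = 𝔽_q(θ)`: it is realized as an algebraic closure of
the rational function field `𝔽̄_q(θ)`, which is an algebraic extension of `𝔽_q(θ)`. -/
abbrev Kbar := AlgebraicClosure (RatFunc (Fb Fq))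

/-- The element `θ ∈ K̄`. -/
def thetaB : Kbar Fq := algebraMap (RatFunc (Fb Fq)) (Kbar Fq) RatFunc.X

/-- The embedding of the constants `𝔽̄_q → K̄`. -/
def constB : Fb Fq →+* Kbar Fq :=
  (algebraMap (RatFunc (Fb Fq)) (Kbar Fq)).comp RatFunc.C

/-- The realization map `𝔽̄_q[θ][t] → K̄[t]`: a two-variable polynomial with coefficients
in `𝔽̄_q` is sent to the polynomial in `t` obtained by evaluating its coefficients at
`θ`.  A polynomial `g ∈ K̄[t]` has all its coefficients in `𝔽̄_q[θ]` exactly when it is in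
the image of this map. -/
def repB : Polynomial (Polynomial (Fb Fq)) →+* Polynomial (Kbar Fq) :=
  Polynomial.mapRingHom (Polynomial.eval₂RingHom (constB Fq) (thetaB Fq))

/-- The `r`-fold (positive) twist `f ↦ f^{(r)}` on `K̄[t]`, raising each coefficient to
the `q^r`-th power. -/
def ptwist (r : ℕ) (f : Polynomial (Kbar Fq)) : Polynomial (Kbar Fq) :=
  ∑ j ∈ f.support, Polynomial.C (f.coeff j ^ qc Fq ^ r) * Polynomial.X ^ j

/-- `deg_θ` of an element of `𝔽̄_q[θ][t]`: the maximal degree in `θ` of its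
coefficients. -/
def degTheta (P : Polynomial (Polynomial (Fb Fq))) : ℕ :=
  P.support.sup fun j => (P.coeff j).natDegree

/-- `R = [𝔽_q(ζ_N) : 𝔽_q]`: the least `r ≥ 1` such that all `N`-th roots of unity in `K̄`
lie in `𝔽_{q^r}`. -/
def RdegB (N : ℕ) : ℕ := sInf {r | 0 < r ∧ ∀ x : Kbar Fq, x ^ N = 1 → x ^ qc Fq ^ r = x}

end ZHPC

/-! Read off the coefficient of `t ^ (k + R m)` in `ε δ^{(R)} = δ T + F`, where
`T = ∏ (t - θ^{q^j})^m` is monic of degree `R m > 0`: it expresses `δ_k` through `ε`, the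
coefficients of `T` and `F` and the `δ_i` with `i > k`. A root of unity is a constant of `𝔽̄_q`,
so descending induction puts every coefficient of `δ` in `𝔽̄_q[θ]`. Comparing `θ`-degrees in a
coefficient of `δ` of maximal `θ`-degree `D` then gives
`q^R D ≤ max (D + m (q + ⋯ + q^R)) (deg_θ F)`, and `(q - 1)(q + ⋯ + q^R) = q (q^R - 1)` turns
this into the bound. -/

open Polynomial

namespace Polynomial

variable {S : Type*} [CommRing S] (T : Subring S)

open Finset.HasAntidiagonal in
theorem Monic.coeff_mul_add_natDegree_sub_mem {δ P : S[X]} (hP : P.Monic)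
    (hPT : ∀ j, P.coeff j ∈ T) {k : ℕ} (hδ : ∀ i, k < i → δ.coeff i ∈ T) :
    (δ * P).coeff (k + P.natDegree) - δ.coeff k ∈ T := by
  have hmem : (k, P.natDegree) ∈ antidiagonal (k + P.natDegree) := mem_antidiagonal.2 rfl
  rw [coeff_mul, ← Finset.add_sum_erase _ _ hmem, hP.coeff_natDegree, mul_one,
    add_sub_cancel_left]
  refine T.sum_mem fun x hx => ?_
  obtain ⟨hne, hx⟩ := Finset.mem_erase.1 hx
  rw [mem_antidiagonal] at hx
  rcases lt_or_gt_of_ne (show x.1 ≠ k from fun h => hne (Prod.ext h (by omega))) with h | h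
  · rw [coeff_eq_zero_of_natDegree_lt (by omega : P.natDegree < x.2), mul_zero]
    exact T.zero_mem
  · exact T.mul_mem (hδ _ h) (hPT _)

theorem coeff_mem_of_coeff_mul_mem_of_monic {δ P : S[X]} (hP : P.Monic)
    (hdeg : 0 < P.natDegree) (hPT : ∀ j, P.coeff j ∈ T)
    (h : ∀ k, δ.coeff k ∈ T → (δ * P).coeff k ∈ T) (k : ℕ) : δ.coeff k ∈ T := by
  induction hd : δ.natDegree + 1 - k using Nat.strong_induction_on generalizing k with
  | _ d ih =>
    by_cases hlt : δ.natDegree < k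
    · rw [coeff_eq_zero_of_natDegree_lt hlt]
      exact T.zero_mem
    have hhigher : ∀ i, k < i → δ.coeff i ∈ T := fun i hi => ih _ (by omega) i rfl
    have hmul := h _ (hhigher (k + P.natDegree) (by omega))
    simpa using T.sub_mem hmul (hP.coeff_mul_add_natDegree_sub_mem T hPT hhigher)

end Polynomial

theorem isIntegral_of_pow_eq_one {K L : Type*} [CommRing K] [Ring L] [Algebra K L] {x : L}
    {N : ℕ} (hN : 0 < N) (hx : x ^ N = 1) : IsIntegral K x :=
  ⟨X ^ N - C 1, monic_X_pow_sub_C 1 hN.ne', by simp [hx]⟩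

theorem IsAlgClosed.mem_range_of_isIntegral {k K : Type*} [Field k] [IsAlgClosed k] [Field K]
    [Algebra k K] {x : K} (hx : IsIntegral k x) : x ∈ Set.range (algebraMap k K) :=
  minpoly.mem_range_of_degree_eq_one k x
    (IsAlgClosed.degree_eq_one_of_irreducible k (minpoly.irreducible hx))

theorem FiniteField.exists_pow_card_pow_eq_self {K L : Type*} [Field K] [Fintype K] [Field L]
    [Algebra K L] (s : Finset L) (hs : ∀ x ∈ s, IsIntegral K x) :
    ∃ r, 0 < r ∧ ∀ x ∈ s, x ^ Fintype.card K ^ r = x := by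
  set E := IntermediateField.adjoin K (s : Set L)
  have : FiniteDimensional K E := IntermediateField.finiteDimensional_adjoin hs
  have : Finite E := Module.finite_of_finite K
  have : Fintype E := Fintype.ofFinite E
  refine ⟨Module.finrank K E, Module.finrank_pos, fun x hx => ?_⟩
  have hfix := FiniteField.pow_card (⟨x, IntermediateField.subset_adjoin K _ hx⟩ : E)
  rw [Module.card_eq_pow_finrank (K := K)] at hfix
  exact congr_arg Subtype.val hfix

theorem geom_sum_Icc_one_mul {R : Type*} [CommRing R] (x : R) (n : ℕ) :
    (∑ j ∈ Finset.Icc 1 n, x ^ j) * (x - 1) = x * (x ^ n - 1) := by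
  rw [← Finset.Ico_add_one_right_eq_Icc, geom_sum_Ico_mul x (by omega)]
  ring

theorem le_max_of_pow_mul_le_max_add_geom_sum {q R D m F : ℕ} (hq : 1 < q) (hR : 0 < R)
    (h : q ^ R * D ≤ max (D + m * ∑ j ∈ Finset.Icc 1 R, q ^ j) F) :
    (D : ℚ) ≤ max ((q * m : ℚ) / ((q : ℚ) - 1)) ((F : ℚ) / (q : ℚ) ^ R) := by
  have hq' : (1 : ℚ) < q := by exact_mod_cast hq
  rcases le_max_iff.1 h with h | h
  · refine le_max_of_le_left ((le_div_iff₀ (by linarith)).2 ?_)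
    have hgeom := geom_sum_Icc_one_mul (q : ℚ) R
    have hcast : (q : ℚ) ^ R * D ≤ D + m * ∑ j ∈ Finset.Icc 1 R, (q : ℚ) ^ j := by
      exact_mod_cast h
    have hqR : (1 : ℚ) < (q : ℚ) ^ R := one_lt_pow₀ hq' hR.ne'
    -- `hcast` times `q - 1`, rewritten by `hgeom`
    have : ((q : ℚ) ^ R - 1) * (D * (q - 1)) ≤ ((q : ℚ) ^ R - 1) * (q * m) := by
      nlinarith
    exact le_of_mul_le_mul_left this (by linarith)
  · refine le_max_of_le_right ((le_div_iff₀ (pow_pos (by linarith) R)).2 ?_)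
    rw [mul_comm]
    exact_mod_cast h

namespace ZHPC

section

variable {Fq : Type} [Field Fq]

theorem exists_constB_eq_of_pow_eq_one {N : ℕ} (hN : 0 < N) {x : Kbar Fq} (hx : x ^ N = 1) :
    ∃ a, constB Fq a = x :=
  IsAlgClosed.mem_range_of_isIntegral (isIntegral_of_pow_eq_one hN hx)

variable (Fq) in
def evalTheta : (Fb Fq)[X] →+* Kbar Fq := eval₂RingHom (constB Fq) (thetaB Fq)

theorem evalTheta_injective : Function.Injective (evalTheta Fq) := by
  have : evalTheta Fq = (algebraMap (RatFunc (Fb Fq)) (Kbar Fq)).comp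
      (algebraMap (Fb Fq)[X] (RatFunc (Fb Fq))) := by
    refine ringHom_ext (fun a => ?_) ?_ <;>
      simp [evalTheta, constB, thetaB, RatFunc.algebraMap_C, RatFunc.algebraMap_X]
  rw [this, RingHom.coe_comp]
  exact (algebraMap (RatFunc (Fb Fq)) (Kbar Fq)).injective.comp
    (RatFunc.algebraMap_injective (Fb Fq))

theorem repB_apply (g : (Fb Fq)[X][X]) : repB Fq g = g.map (evalTheta Fq) := rfl

theorem coeff_repB (g : (Fb Fq)[X][X]) (k : ℕ) :
    (repB Fq g).coeff k = evalTheta Fq (g.coeff k) :=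
  coeff_map _ _

theorem natDegree_coeff_le_degTheta (P : (Fb Fq)[X][X]) (k : ℕ) :
    (P.coeff k).natDegree ≤ degTheta Fq P := by
  by_cases h : k ∈ P.support
  · exact Finset.le_sup (f := fun j => (P.coeff j).natDegree) h
  · simp [notMem_support_iff.1 h]

theorem degTheta_le_iff {P : (Fb Fq)[X][X]} {n : ℕ} :
    degTheta Fq P ≤ n ↔ ∀ k, (P.coeff k).natDegree ≤ n :=
  ⟨fun h k => (natDegree_coeff_le_degTheta P k).trans h, fun h => Finset.sup_le fun j _ => h j⟩

theorem exists_natDegree_coeff_eq_degTheta (P : (Fb Fq)[X][X]) :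
    ∃ k, (P.coeff k).natDegree = degTheta Fq P := by
  rcases P.support.eq_empty_or_nonempty with h | h
  · exact ⟨0, by simp [degTheta, h, Finset.notMem_empty, notMem_support_iff.1]⟩
  · obtain ⟨k, -, hk⟩ := Finset.exists_mem_eq_sup _ h fun j => (P.coeff j).natDegree
    exact ⟨k, hk.symm⟩

theorem degTheta_mul_le (P Q : (Fb Fq)[X][X]) :
    degTheta Fq (P * Q) ≤ degTheta Fq P + degTheta Fq Q := by
  refine degTheta_le_iff.2 fun k => ?_
  rw [coeff_mul]
  exact natDegree_sum_le_of_forall_le _ _ fun x _ => natDegree_mul_le.trans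
    (add_le_add (natDegree_coeff_le_degTheta P x.1) (natDegree_coeff_le_degTheta Q x.2))

theorem degTheta_prod_le {ι : Type*} (s : Finset ι) (f : ι → (Fb Fq)[X][X]) :
    degTheta Fq (∏ i ∈ s, f i) ≤ ∑ i ∈ s, degTheta Fq (f i) := by
  classical
  induction s using Finset.cons_induction with
  | empty =>
    rw [Finset.prod_empty, Finset.sum_empty, degTheta_le_iff]
    intro k
    rw [coeff_one]
    split_ifs <;> simp
  | cons a s ha ih =>
    rw [Finset.prod_cons, Finset.sum_cons]
    exact (degTheta_mul_le _ _).trans (by omega)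

theorem degTheta_pow_le (P : (Fb Fq)[X][X]) (n : ℕ) :
    degTheta Fq (P ^ n) ≤ n * degTheta Fq P := by
  simpa using degTheta_prod_le (Finset.range n) fun _ => P

theorem degTheta_X_sub_C_le (g : (Fb Fq)[X]) : degTheta Fq (X - C g) ≤ g.natDegree := by
  refine degTheta_le_iff.2 fun k => ?_
  rcases k with _ | _ | k <;> simp [coeff_X, coeff_C]

/-- Compare `θ`-degrees in the coefficient of `δ₀` of largest `θ`-degree. -/
theorem pow_mul_degTheta_le {a : Fb Fq} (ha : a ≠ 0) {Q : ℕ} {δ₀ P₀ F₀ : (Fb Fq)[X][X]}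
    (h : ∀ k, C a * δ₀.coeff k ^ Q = (δ₀ * P₀).coeff k + F₀.coeff k) :
    Q * degTheta Fq δ₀ ≤ max (degTheta Fq δ₀ + degTheta Fq P₀) (degTheta Fq F₀) := by
  obtain ⟨k, hk⟩ := exists_natDegree_coeff_eq_degTheta δ₀
  calc Q * degTheta Fq δ₀ = (C a * δ₀.coeff k ^ Q).natDegree := by
        rw [natDegree_C_mul ha, natDegree_pow, hk]
    _ ≤ max ((δ₀ * P₀).coeff k).natDegree (F₀.coeff k).natDegree := by
        rw [h]
        exact natDegree_add_le _ _
    _ ≤ max (degTheta Fq δ₀ + degTheta Fq P₀) (degTheta Fq F₀) :=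
        max_le_max ((natDegree_coeff_le_degTheta _ k).trans (degTheta_mul_le _ _))
          (natDegree_coeff_le_degTheta _ k)

end

section

variable {Fq : Type} [Field Fq] [Fintype Fq]

theorem one_lt_qc : 1 < qc Fq := Fintype.one_lt_card

theorem ptwist_coeff (r : ℕ) (f : (Kbar Fq)[X]) (k : ℕ) :
    (ptwist Fq r f).coeff k = f.coeff k ^ qc Fq ^ r := by
  rw [ptwist, finsetSum_coeff]
  simp only [coeff_C_mul, coeff_X_pow, mul_ite, mul_one, mul_zero, Finset.sum_ite_eq]
  split_ifs with h
  · rfl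
  · rw [notMem_support_iff.1 h, zero_pow (pow_ne_zero _ (by have := one_lt_qc (Fq := Fq); omega))]

theorem RdegB_pos {N : ℕ} (hN : 0 < N) : 0 < RdegB Fq N := by
  have hroots : ∀ x : Kbar Fq, x ∈ (nthRoots N (1 : Kbar Fq)).toFinset ↔ x ^ N = 1 := by
    simp [mem_nthRoots hN]
  obtain ⟨r, hr, hfix⟩ := FiniteField.exists_pow_card_pow_eq_self (K := Fq) _
    fun x hx => isIntegral_of_pow_eq_one hN ((hroots x).1 hx)
  have hne : {r | 0 < r ∧ ∀ x : Kbar Fq, x ^ N = 1 → x ^ qc Fq ^ r = x}.Nonempty :=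
    ⟨r, hr, fun x hx => hfix x ((hroots x).2 hx)⟩
  exact (Nat.sInf_mem hne).1

variable (Fq) in
/-- `∏_{j=1}^{R} (t - θ^{q^j})^m` in `𝔽̄_q[θ][t]`: the outer `X` is `t`, the inner one `θ`. -/
def twistFactor (R m : ℕ) : (Fb Fq)[X][X] := ∏ j ∈ Finset.Icc 1 R, (X - C (X ^ qc Fq ^ j)) ^ m

theorem repB_twistFactor (R m : ℕ) :
    repB Fq (twistFactor Fq R m)
      = ∏ j ∈ Finset.Icc 1 R, (X - C (thetaB Fq ^ qc Fq ^ j)) ^ m := by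
  simp [twistFactor, repB, constB]

theorem monic_twistFactor (R m : ℕ) : (twistFactor Fq R m).Monic :=
  monic_prod_of_monic _ _ fun _ _ => (monic_X_sub_C _).pow m

theorem natDegree_twistFactor (R m : ℕ) : (twistFactor Fq R m).natDegree = R * m := by
  rw [twistFactor, natDegree_prod_of_monic _ _ fun _ _ => (monic_X_sub_C _).pow m]
  simp only [natDegree_pow, natDegree_X_sub_C, mul_one, Finset.sum_const, Nat.card_Icc,
    Nat.add_sub_cancel, smul_eq_mul]

theorem degTheta_twistFactor_le (R m : ℕ) :
    degTheta Fq (twistFactor Fq R m) ≤ m * ∑ j ∈ Finset.Icc 1 R, qc Fq ^ j := by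
  rw [Finset.mul_sum]
  refine (degTheta_prod_le _ _).trans (Finset.sum_le_sum fun j _ => ?_)
  refine (degTheta_pow_le _ m).trans (Nat.mul_le_mul_left m ?_)
  simpa using degTheta_X_sub_C_le (Fq := Fq) (X ^ qc Fq ^ j)

theorem exists_repB_eq_of_twisted_eq {a : Fb Fq} {r : ℕ} {δ : (Kbar Fq)[X]}
    {P₀ F₀ : (Fb Fq)[X][X]} (hP : P₀.Monic) (hdeg : 0 < P₀.natDegree)
    (h : C (constB Fq a) * ptwist Fq r δ = δ * repB Fq P₀ + repB Fq F₀) :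
    ∃ δ₀, δ = repB Fq δ₀ := by
  have hrange (g : (Fb Fq)[X][X]) (k : ℕ) : (repB Fq g).coeff k ∈ (evalTheta Fq).range :=
    ⟨g.coeff k, (coeff_repB g k).symm⟩
  have hcoeff := coeff_mem_of_coeff_mul_mem_of_monic _ (δ := δ) (P := repB Fq P₀) (hP.map _)
    (by rwa [repB_apply, hP.natDegree_map]) (hrange P₀) fun k hk => by
      have hk' := congr_arg (coeff · k) h
      simp only [coeff_C_mul, ptwist_coeff, coeff_add] at hk'
      rw [eq_sub_of_add_eq hk'.symm]
      exact sub_mem (mul_mem ⟨C a, by simp [evalTheta]⟩ (pow_mem hk _)) (hrange F₀ k)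
  obtain ⟨δ₀, hδ₀⟩ := (mem_lifts δ).1 ((lifts_iff_coeff_lifts δ).2 hcoeff)
  exact ⟨δ₀, hδ₀.symm⟩

theorem coeff_eq_of_twisted_eq_repB {a : Fb Fq} {r : ℕ} {δ₀ P₀ F₀ : (Fb Fq)[X][X]}
    (h : C (constB Fq a) * ptwist Fq r (repB Fq δ₀) = repB Fq δ₀ * repB Fq P₀ + repB Fq F₀)
    (k : ℕ) : C a * δ₀.coeff k ^ qc Fq ^ r = (δ₀ * P₀).coeff k + F₀.coeff k := by
  apply evalTheta_injective
  have hk := congr_arg (coeff · k) h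
  simp only [coeff_C_mul, ptwist_coeff, coeff_add, ← map_mul, coeff_repB, ← map_pow] at hk
  simpa [evalTheta] using hk

end

/-- **A descent lemma for twisted polynomial equations** (Lemma `KuanLin 2`): let `m ∈ ℕ`,
`ε ∈ Γ_N`, `δ ∈ K̄[t]` and `F ∈ K̄[t]` with all coefficients of `F` in `𝔽̄_q[θ]`.  If
`ε·δ^{(R)} = δ·∏_{j=1}^{R}(t - θ^{q^j})^m + F` (the `R`-fold-twisted form of
`ε·δ = δ^{(-R)}·T_{m,R} + F^{(-R)}`), then all the coefficients of `δ` lie in `𝔽̄_q[θ]`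
and `deg_θ δ ≤ max (qm/(q-1)) ((deg_θ F)/q^R)`. -/
theorem descent_lemma_twisted_polynomial_equations
    (Fq : Type) [Field Fq] [Fintype Fq] (N : ℕ) (hN : 0 < N)
    (m : ℕ) (hm : 0 < m) (ε : Kbar Fq) (hε : ε ^ N = 1)
    (δ F : Polynomial (Kbar Fq)) (F₀ : Polynomial (Polynomial (Fb Fq)))
    (hF : F = repB Fq F₀)
    (heq : Polynomial.C ε * ptwist Fq (RdegB Fq N) δ
      = δ * (∏ j ∈ Finset.Icc 1 (RdegB Fq N),
              (Polynomial.X - Polynomial.C (thetaB Fq ^ qc Fq ^ j)) ^ m) + F) :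
    ∃ δ₀ : Polynomial (Polynomial (Fb Fq)),
      δ = repB Fq δ₀ ∧
      (degTheta Fq δ₀ : ℚ) ≤
        max ((qc Fq * m : ℚ) / ((qc Fq : ℚ) - 1))
            ((degTheta Fq F₀ : ℚ) / (qc Fq : ℚ) ^ RdegB Fq N) := by
  obtain ⟨a, rfl⟩ := exists_constB_eq_of_pow_eq_one hN hε
  have ha : a ≠ 0 := by
    rintro rfl
    simp [zero_pow hN.ne'] at hε
  have hR := RdegB_pos (Fq := Fq) hN
  rw [← repB_twistFactor, hF] at heq
  obtain ⟨δ₀, rfl⟩ := exists_repB_eq_of_twisted_eq (monic_twistFactor (RdegB Fq N) m)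
    (by rw [natDegree_twistFactor]; exact Nat.mul_pos hR hm) heq
  have hdeg := (pow_mul_degTheta_le ha (coeff_eq_of_twisted_eq_repB heq)).trans
    (max_le_max_right _ (Nat.add_le_add_left (degTheta_twistFactor_le (RdegB Fq N) m) _))
  exact ⟨δ₀, rfl, le_max_of_pow_mul_le_max_add_geom_sum one_lt_qc hR hdeg⟩

end ZHPC
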